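/- arXiv:1909.06913 — 5 statements merged into one kernel-verified Lean document; each statement's English description precedes it below -/
import Mathlib

section
/- Let T : (ℤ/τ) × (ℤ/σ) → ℤ_n be a simple tile (i.e., the number of distinct ordered pairs (T(i,j), T(i,j+1)) over all i,j equals the number of distinct states appearing in T) that is generated by a rule f and whose rows are all aperiodic (no row equals a nontrivial circular shift of itself). Then each row of T consists of σ distinct states. -/
/-- The set of distinct states appearing in a tile. -/
def states (n τ σ : ℕ) [NeZero τ] [NeZero σ] (T : ZMod τ → ZMod σ → ZMod n) :
    Finset (ZMod n) :=
  Finset.image (fun p : ZMod τ × ZMod σ => T p.1 p.2) Finset.univ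

/-- The set of distinct row-adjacent pairs appearing in a tile (the assignments). -/
def pairs (n τ σ : ℕ) [NeZero τ] [NeZero σ] (T : ZMod τ → ZMod σ → ZMod n) :
    Finset (ZMod n × ZMod n) :=
  Finset.image (fun p : ZMod τ × ZMod σ => (T p.1 p.2, T p.1 (p.2 + 1))) Finset.univ

/-- If `T` is a simple tile (assignment number `p(T)` equals number of states `s(T)`)
generated by a rule `f`, all of whose rows are aperiodic, then each row of `T`
consists of `σ` distinct states. -/
theorem simple_tile_rows_injective (n τ σ : ℕ) [NeZero τ] [NeZero σ]
    (f : ZMod n → ZMod n → ZMod n) (T : ZMod τ → ZMod σ → ZMod n)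
    (hT : ∀ i j, T (i + 1) (j + 1) = f (T i j) (T i (j + 1)))
    (hsimple : (pairs n τ σ T).card = (states n τ σ T).card)
    (haper : ∀ (i : ZMod τ) (c : ZMod σ), c ≠ 0 → (fun j => T i (j + c)) ≠ T i) :
    ∀ i : ZMod τ, Function.Injective (T i) := by
  classical
  -- The first projection maps `pairs` onto `states`.
  have himg : (pairs n τ σ T).image Prod.fst = states n τ σ T := by
    apply Finset.Subset.antisymm
    · intro a ha
      simp only [pairs, states, Finset.mem_image] at ha ⊢
      obtain ⟨q, hq, rfl⟩ := ha
      obtain ⟨p, -, rfl⟩ := hq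
      exact ⟨p, Finset.mem_univ p, rfl⟩
    · intro a ha
      simp only [pairs, states, Finset.mem_image] at ha ⊢
      obtain ⟨p, -, rfl⟩ := ha
      exact ⟨(T p.1 p.2, T p.1 (p.2 + 1)), ⟨p, Finset.mem_univ p, rfl⟩, rfl⟩
  -- Hence `Prod.fst` is injective on `pairs`.
  have hinj : Set.InjOn Prod.fst (pairs n τ σ T : Set (ZMod n × ZMod n)) := by
    rw [← Finset.card_image_iff]
    rw [himg, hsimple]
  -- Key step: the next state in a row is determined by the current state.
  have hstep : ∀ (i i' : ZMod τ) (j j' : ZMod σ),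
      T i j = T i' j' → T i (j + 1) = T i' (j' + 1) := by
    intro i i' j j' h
    have h1 : (T i j, T i (j + 1)) ∈ pairs n τ σ T := by
      simp only [pairs, Finset.mem_image]
      exact ⟨(i, j), Finset.mem_univ _, rfl⟩
    have h2 : (T i' j', T i' (j' + 1)) ∈ pairs n τ σ T := by
      simp only [pairs, Finset.mem_image]
      exact ⟨(i', j'), Finset.mem_univ _, rfl⟩
    have := hinj h1 h2 (by simpa using h)
    exact congrArg Prod.snd this
  intro i a b hab
  by_contra hne
  -- propagate equality along the row
  have hprop : ∀ k : ℕ, T i (a + k) = T i (b + k) := by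
    intro k
    induction k with
    | zero => simpa using hab
    | succ m ih =>
      have := hstep i i (a + m) (b + m) ih
      simpa [add_assoc] using this
  set c : ZMod σ := b - a with hc
  have hc0 : c ≠ 0 := fun h => hne (by
    have : b = a := by
      have := sub_eq_zero.mp (hc ▸ h)
      exact this
    exact this.symm ▸ rfl)
  apply haper i c hc0
  funext j
  have hk : ((j - a).val : ZMod σ) = j - a := ZMod.natCast_zmod_val (j - a)
  have := hprop (j - a).val
  rw [hk] at this
  have hj : a + (j - a) = j := by ring
  have hj' : b + (j - a) = j + c := by rw [hc]; ring
  rw [hj, hj'] at this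
  exact this.symm
end

section
/- Let T : (ℤ/τ) × (ℤ/σ) → ℤ_n be a simple tile generated by a rule f, with all rows aperiodic. If two rows share a state, i.e., T(i,j) = T(k,m) for some i ≠ k, then row k is a circular shift of row i; specifically T(i, j+q) = T(k, m+q) for all q. -/
lemma states_eq_image_fst (n τ σ : ℕ) [NeZero τ] [NeZero σ]
    (T : ZMod τ → ZMod σ → ZMod n) :
    states n τ σ T = (pairs n τ σ T).image Prod.fst := by
  rw [states, pairs, Finset.image_image]; rfl

lemma next_eq (n τ σ : ℕ) [NeZero τ] [NeZero σ]
    (T : ZMod τ → ZMod σ → ZMod n)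
    (hsimple : (pairs n τ σ T).card = (states n τ σ T).card)
    (a : ZMod τ) (b : ZMod σ) (c : ZMod τ) (d : ZMod σ)
    (h : T a b = T c d) : T a (b + 1) = T c (d + 1) := by
  rw [states_eq_image_fst] at hsimple
  have hinj : Set.InjOn Prod.fst (pairs n τ σ T : Set (ZMod n × ZMod n)) :=
    Finset.injOn_of_card_image_eq hsimple.symm
  have h1 : ((T a b, T a (b + 1)) : ZMod n × ZMod n) ∈ pairs n τ σ T := by
    simp [pairs]; exact ⟨a, b, rfl, rfl⟩
  have h2 : ((T c d, T c (d + 1)) : ZMod n × ZMod n) ∈ pairs n τ σ T := by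
    simp [pairs]; exact ⟨c, d, rfl, rfl⟩
  have := hinj h1 h2 h
  exact (Prod.mk.injEq _ _ _ _ ▸ this).2

/-- In a simple tile generated by a rule `f` with all rows aperiodic: if two rows
share a state, `T(i,j) = T(k,m)` with `i ≠ k`, then row `k` is a circular shift of
row `i`, namely `T(i, j+q) = T(k, m+q)` for all `q`. -/
theorem simple_tile_rows_circular_shift (n τ σ : ℕ) [NeZero τ] [NeZero σ]
    (f : ZMod n → ZMod n → ZMod n) (T : ZMod τ → ZMod σ → ZMod n)
    (hT : ∀ i j, T (i + 1) (j + 1) = f (T i j) (T i (j + 1)))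
    (hsimple : (pairs n τ σ T).card = (states n τ σ T).card)
    (haper : ∀ (i : ZMod τ) (c : ZMod σ), c ≠ 0 → (fun j => T i (j + c)) ≠ T i)
    (i k : ZMod τ) (j m : ZMod σ) (hik : i ≠ k) (hshare : T i j = T k m) :
    ∀ q : ZMod σ, T i (j + q) = T k (m + q) := by
  have key : ∀ t : ℕ, T i (j + (t : ZMod σ)) = T k (m + (t : ZMod σ)) := by
    intro t
    induction t with
    | zero => simpa using hshare
    | succ t ih =>
        have := next_eq n τ σ T hsimple i (j + t) k (m + t) ih
        push_cast
        simpa [add_assoc] using this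
  intro q
  have := key q.val
  simpa [ZMod.natCast_val, ZMod.cast_id] using this
end

section
/- Let T be a simple tile of a periodic solution with minimal temporal period τ and minimal spatial period σ. If an integer s ≤ n is the number of distinct states in T, then s = τσ/d for some divisor d of gcd(τ,σ). Conversely, for every divisor d of gcd(τ,σ) with τσ/d ≤ n, there exists a simple tile with exactly τσ/d distinct states. -/
/-- `T` is generated by the rule `f`. -/
def GenBy (n τ σ : ℕ) (f : ZMod n → ZMod n → ZMod n) (T : ZMod τ → ZMod σ → ZMod n) : Prop :=
  ∀ i j, T (i + 1) (j + 1) = f (T i j) (T i (j + 1))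

/-- The temporal period `τ` of `T` is minimal: no nonzero temporal shift fixes `T`. -/
def MinTemporal (n τ σ : ℕ) (T : ZMod τ → ZMod σ → ZMod n) : Prop :=
  ∀ t : ZMod τ, t ≠ 0 → ∃ i j, T (i + t) j ≠ T i j

/-- The spatial period `σ` of `T` is minimal: no nonzero spatial shift fixes `T`. -/
def MinSpatial (n τ σ : ℕ) (T : ZMod τ → ZMod σ → ZMod n) : Prop :=
  ∀ c : ZMod σ, c ≠ 0 → ∃ i j, T i (j + c) ≠ T i j

/-- `T` is simple: its assignment number equals its number of states. -/
def Simple (n τ σ : ℕ) [NeZero τ] [NeZero σ] (T : ZMod τ → ZMod σ → ZMod n) : Prop :=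
  (pairs n τ σ T).card = (states n τ σ T).card

/-!
If `T` is simple, the state at a cell determines the state to its right, and by the rule also
the state diagonally below-right. Since `(0, 1)` and `(1, 1)` generate `ℤ/τ × ℤ/σ`, equal states
stay equal under every common translation, so two cells carry the same state exactly when their
difference lies in the group `H` of periods of `T`. Hence the number of states is the index of
`H`, and minimality of `τ` and `σ` says that `H` meets both axes trivially, so both projections
embed `H` and `|H|` divides `gcd(τ, σ)`. Conversely, for `d ∣ gcd(τ, σ)` the cyclic group
generated by `(τ/d, σ/d)` has order `d` and meets both axes trivially; any injective labelling
of its cosets by states is a simple tile with `τσ/d` states.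
-/

namespace PeriodicTile

section Periods

variable {G α : Type*} [AddCommGroup G]

def periods (T : G → α) : AddSubgroup G where
  carrier := {v | ∀ p, T (p + v) = T p}
  zero_mem' p := by rw [add_zero]
  add_mem' {a b} ha hb p := by rw [← add_assoc, hb, ha]
  neg_mem' {a} ha p := by rw [← ha, neg_add_cancel_right]

def compatibleShifts (T : G → α) : AddSubmonoid G where
  carrier := {v | ∀ p q, T p = T q → T (p + v) = T (q + v)}
  zero_mem' p q h := by rwa [add_zero, add_zero]
  add_mem' {a b} ha hb p q h := by
    rw [← add_assoc, ← add_assoc]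
    exact hb _ _ (ha p q h)

theorem eq_iff_sub_mem_periods {T : G → α} (hT : compatibleShifts T = ⊤) {p q : G} :
    T p = T q ↔ q - p ∈ periods T := by
  rw [AddSubmonoid.eq_top_iff'] at hT
  constructor
  · intro h x
    have := hT (x - p) p q h
    rw [add_sub_cancel, add_sub_left_comm] at this
    exact this.symm
  · intro h
    simpa using (h p).symm

theorem compatibleShifts_eq_top_of_eq_iff {T : G → α} {H : AddSubgroup G}
    (hT : ∀ p q, T p = T q ↔ q - p ∈ H) : compatibleShifts T = ⊤ :=
  eq_top_iff.2 fun v _ p q h => (hT _ _).2 (by simpa using (hT p q).1 h)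

theorem periods_eq_of_eq_iff {T : G → α} {H : AddSubgroup G}
    (hT : ∀ p q, T p = T q ↔ q - p ∈ H) : periods T = H := by
  ext v
  refine ⟨fun hv => by simpa using (hT v 0).1 (by simpa using hv 0), fun hv p => ?_⟩
  exact (hT _ _).2 (by simpa using H.neg_mem hv)

theorem card_range_mul_card_eq [Finite G] {T : G → α} {H : AddSubgroup G}
    (hT : ∀ p q, T p = T q ↔ q - p ∈ H) :
    Nat.card (Set.range T) * Nat.card H = Nat.card G := by
  have hker : ∀ p q, Setoid.ker T p q ↔ QuotientAddGroup.leftRel H p q := fun p q => by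
    rw [QuotientAddGroup.leftRel_apply, neg_add_eq_sub, ← hT]
    rfl
  rw [H.card_eq_card_quotient_mul_card_addSubgroup,
    Nat.card_congr ((Setoid.quotientKerEquivRange T).symm.trans (Quotient.congrRight hker))]
  rfl

end Periods

theorem card_dvd_of_forall_map_eq_zero {G K : Type*} [AddGroup G] [AddGroup K] [Finite K]
    {H : AddSubgroup G} (f : G →+ K) (hf : ∀ x ∈ H, f x = 0 → x = 0) :
    Nat.card H ∣ Nat.card K :=
  AddSubgroup.card_dvd_of_injective (f.comp H.subtype) <|
    (injective_iff_map_eq_zero _).2 fun x hx => Subtype.ext (hf x x.2 hx)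

theorem eq_top_of_one_one_mem_of_zero_one_mem {τ σ : ℕ} [NeZero τ] [NeZero σ]
    {S : AddSubmonoid (ZMod τ × ZMod σ)} (h₁₁ : (1, 1) ∈ S) (h₀₁ : (0, 1) ∈ S) : S = ⊤ := by
  refine eq_top_iff.2 fun v _ => ?_
  have hv : v = v.1.val • ((1, 1) : ZMod τ × ZMod σ) + (v.2 - v.1.val).val • (0, 1) := by
    ext <;> simp
  rw [hv]
  exact S.add_mem (S.nsmul_mem h₁₁ _) (S.nsmul_mem h₀₁ _)

theorem zsmul_natCast_eq_zero_iff {m d t : ℕ} (h : m = d * t) (ht : t ≠ 0) (k : ℤ) :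
    k • (t : ZMod m) = 0 ↔ (d : ℤ) ∣ k := by
  rw [zsmul_eq_mul, ← Int.cast_natCast, ← Int.cast_mul, ZMod.intCast_zmod_eq_zero_iff_dvd, h,
    Nat.cast_mul, mul_dvd_mul_iff_right (by exact_mod_cast ht)]

theorem zsmul_pair_eq_zero_iff {τ σ d t b : ℕ} (hτ : τ = d * t) (hσ : σ = d * b) (ht : t ≠ 0)
    (hb : b ≠ 0) (k : ℤ) : k • ((t, b) : ZMod τ × ZMod σ) = 0 ↔ (d : ℤ) ∣ k := by
  simp only [Prod.ext_iff, Prod.smul_mk, Prod.fst_zero, Prod.snd_zero,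
    zsmul_natCast_eq_zero_iff hτ ht, zsmul_natCast_eq_zero_iff hσ hb, and_self]

section Tile

open Function

variable {n τ σ : ℕ} {T : ZMod τ → ZMod σ → ZMod n}

theorem minTemporal_iff : MinTemporal n τ σ T ↔ ∀ t, (t, 0) ∈ periods (uncurry T) → t = 0 := by
  refine forall_congr' fun t => ?_
  rw [not_imp_comm]
  simp [periods, uncurry]

theorem minSpatial_iff : MinSpatial n τ σ T ↔ ∀ c, (0, c) ∈ periods (uncurry T) → c = 0 := by
  refine forall_congr' fun c => ?_
  rw [not_imp_comm]
  simp [periods, uncurry]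

variable [NeZero τ] [NeZero σ]

theorem coe_states : (states n τ σ T : Set (ZMod n)) = Set.range (uncurry T) := by
  rw [states, Finset.coe_image, Finset.coe_univ, Set.image_univ]
  rfl

theorem card_states : (states n τ σ T).card = Nat.card (Set.range (uncurry T)) := by
  rw [← coe_states]
  exact (Nat.card_eq_finsetCard _).symm

theorem states_eq_image_fst : states n τ σ T = (pairs n τ σ T).image Prod.fst := by
  rw [states, pairs, Finset.image_image]
  rfl

theorem simple_iff_zero_one_mem : Simple n τ σ T ↔ (0, 1) ∈ compatibleShifts (uncurry T) := by
  have hmem : ∀ p : ZMod τ × ZMod σ, (T p.1 p.2, T p.1 (p.2 + 1)) ∈ pairs n τ σ T :=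
    fun p => Finset.mem_image_of_mem _ (Finset.mem_univ p)
  rw [Simple, states_eq_image_fst]
  constructor
  · intro h p q hpq
    simpa [uncurry] using
      congrArg Prod.snd (Finset.injOn_of_card_image_eq h.symm (hmem p) (hmem q) hpq)
  · intro h
    refine (Finset.card_image_of_injOn ?_).symm
    simp only [pairs, Finset.coe_image, Finset.coe_univ, Set.image_univ]
    rintro _ ⟨p, rfl⟩ _ ⟨q, rfl⟩ hpq
    exact Prod.ext hpq (by simpa [uncurry] using h p q hpq)

theorem one_one_mem_compatibleShifts {f : ZMod n → ZMod n → ZMod n} (hG : GenBy n τ σ f T)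
    (hS : Simple n τ σ T) : (1, 1) ∈ compatibleShifts (uncurry T) := by
  intro p q hpq
  simp only [uncurry, Prod.fst_add, Prod.snd_add]
  rw [hG, hG, show T p.1 p.2 = T q.1 q.2 from hpq, show T p.1 (p.2 + 1) = T q.1 (q.2 + 1) by
    simpa [uncurry] using simple_iff_zero_one_mem.1 hS p q hpq]

theorem exists_dvd_gcd_card_states_mul_eq {f : ZMod n → ZMod n → ZMod n} (hG : GenBy n τ σ f T)
    (hτ : MinTemporal n τ σ T) (hσ : MinSpatial n τ σ T) (hS : Simple n τ σ T) :
    ∃ d, d ∣ Nat.gcd τ σ ∧ (states n τ σ T).card * d = τ * σ := by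
  have hT : compatibleShifts (uncurry T) = ⊤ :=
    eq_top_of_one_one_mem_of_zero_one_mem (one_one_mem_compatibleShifts hG hS)
      (simple_iff_zero_one_mem.1 hS)
  refine ⟨Nat.card (periods (uncurry T)), Nat.dvd_gcd ?_ ?_, ?_⟩
  · simpa using card_dvd_of_forall_map_eq_zero (AddMonoidHom.fst (ZMod τ) (ZMod σ))
      fun x hx h₀ => Prod.ext h₀ (minSpatial_iff.1 hσ x.2 (by rwa [← h₀]))
  · simpa using card_dvd_of_forall_map_eq_zero (AddMonoidHom.snd (ZMod τ) (ZMod σ))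
      fun x hx h₀ => Prod.ext (minTemporal_iff.1 hτ x.1 (by rwa [← h₀])) h₀
  · rw [card_states, card_range_mul_card_eq fun p q => eq_iff_sub_mem_periods hT, Nat.card_prod,
      Nat.card_zmod, Nat.card_zmod]

theorem exists_tile_of_addSubgroup (H : AddSubgroup (ZMod τ × ZMod σ))
    (hτ : ∀ t, (t, 0) ∈ H → t = 0) (hσ : ∀ c, (0, c) ∈ H → c = 0)
    (hn : Nat.card ((ZMod τ × ZMod σ) ⧸ H) ≤ n) :
    ∃ (f : ZMod n → ZMod n → ZMod n) (T : ZMod τ → ZMod σ → ZMod n),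
      GenBy n τ σ f T ∧ MinTemporal n τ σ T ∧ MinSpatial n τ σ T ∧ Simple n τ σ T ∧
        (states n τ σ T).card * Nat.card H = τ * σ := by
  classical
  have : NeZero n := ⟨by have := Nat.card_pos (α := (ZMod τ × ZMod σ) ⧸ H); omega⟩
  obtain ⟨ι⟩ := Embedding.nonempty_of_card_le (α := (ZMod τ × ZMod σ) ⧸ H) (β := ZMod n)
    (by simpa [← Nat.card_eq_fintype_card] using hn)
  let T : ZMod τ → ZMod σ → ZMod n := fun i j => ι (i, j)
  have hT : ∀ p q, uncurry T p = uncurry T q ↔ q - p ∈ H := fun p q => by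
    simp [T, uncurry, ι.injective.eq_iff, QuotientAddGroup.eq, neg_add_eq_sub]
  have hper : periods (uncurry T) = H := periods_eq_of_eq_iff hT
  refine ⟨fun x _ => ι (invFun ι x + ((1, 1) : ZMod τ × ZMod σ)), T, ?_, ?_, ?_, ?_, ?_⟩
  · intro i j
    simp only [T, leftInverse_invFun ι.injective _]
    rfl
  · rw [minTemporal_iff, hper]
    exact hτ
  · rw [minSpatial_iff, hper]
    exact hσ
  · rw [simple_iff_zero_one_mem, compatibleShifts_eq_top_of_eq_iff hT]
    trivial
  · rw [card_states, card_range_mul_card_eq hT, Nat.card_prod, Nat.card_zmod, Nat.card_zmod]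

theorem exists_tile_card_states_eq {d : ℕ} (hd : d ∣ Nat.gcd τ σ) (hn : τ * σ / d ≤ n) :
    ∃ (f : ZMod n → ZMod n → ZMod n) (T : ZMod τ → ZMod σ → ZMod n),
      GenBy n τ σ f T ∧ MinTemporal n τ σ T ∧ MinSpatial n τ σ T ∧ Simple n τ σ T ∧
        (states n τ σ T).card = τ * σ / d := by
  obtain ⟨t, hτt⟩ := hd.trans (Nat.gcd_dvd_left τ σ)
  obtain ⟨b, hσb⟩ := hd.trans (Nat.gcd_dvd_right τ σ)
  have ht : t ≠ 0 := by rintro rfl; exact NeZero.ne τ (by simpa using hτt)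
  have hb : b ≠ 0 := by rintro rfl; exact NeZero.ne σ (by simpa using hσb)
  have hd₀ : d ≠ 0 := by rintro rfl; exact NeZero.ne τ (by simpa using hτt)
  have hx := zsmul_pair_eq_zero_iff hτt hσb ht hb
  set H := AddSubgroup.zmultiples ((t, b) : ZMod τ × ZMod σ)
  have hcard : Nat.card H = d := by
    rw [Nat.card_zmultiples]
    exact Nat.dvd_antisymm
      (Int.natCast_dvd_natCast.1 (addOrderOf_dvd_iff_zsmul_eq_zero.2 ((hx d).2 dvd_rfl)))
      (Int.natCast_dvd_natCast.1 ((hx _).1 (addOrderOf_dvd_iff_zsmul_eq_zero.1 dvd_rfl)))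
  have hquot : Nat.card ((ZMod τ × ZMod σ) ⧸ H) = τ * σ / d := by
    refine Nat.eq_div_of_mul_eq_left hd₀ ?_
    rw [← hcard, ← AddSubgroup.card_eq_card_quotient_mul_card_addSubgroup, Nat.card_prod,
      Nat.card_zmod, Nat.card_zmod]
  have hH₁ : ∀ a, (a, 0) ∈ H → a = 0 := fun a ha => by
    obtain ⟨k, hk⟩ := AddSubgroup.mem_zmultiples_iff.1 ha
    have hdk := (zsmul_natCast_eq_zero_iff hσb hb k).1 (congrArg Prod.snd hk)
    exact congrArg Prod.fst (hk.symm.trans ((hx k).2 hdk))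
  have hH₂ : ∀ c, (0, c) ∈ H → c = 0 := fun c hc => by
    obtain ⟨k, hk⟩ := AddSubgroup.mem_zmultiples_iff.1 hc
    have hdk := (zsmul_natCast_eq_zero_iff hτt ht k).1 (congrArg Prod.fst hk)
    exact congrArg Prod.snd (hk.symm.trans ((hx k).2 hdk))
  obtain ⟨f, T, hG, hτ, hσ, hS, hs⟩ := exists_tile_of_addSubgroup (n := n) H hH₁ hH₂ (hquot ▸ hn)
  refine ⟨f, T, hG, hτ, hσ, hS, ?_⟩
  rw [hcard] at hs
  exact Nat.eq_div_of_mul_eq_left hd₀ hs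

end Tile

end PeriodicTile

theorem simple_tile_state_counts_general (n τ σ : ℕ) [NeZero τ] [NeZero σ] :
    (∀ (f : ZMod n → ZMod n → ZMod n) (T : ZMod τ → ZMod σ → ZMod n),
      GenBy n τ σ f T → MinTemporal n τ σ T → MinSpatial n τ σ T → Simple n τ σ T →
      ∀ s : ℕ, s ≤ n → (states n τ σ T).card = s →
        ∃ d, d ∣ Nat.gcd τ σ ∧ s * d = τ * σ) ∧
    (∀ d : ℕ, d ∣ Nat.gcd τ σ → τ * σ / d ≤ n →
      ∃ (f : ZMod n → ZMod n → ZMod n) (T : ZMod τ → ZMod σ → ZMod n),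
        GenBy n τ σ f T ∧ MinTemporal n τ σ T ∧ MinSpatial n τ σ T ∧ Simple n τ σ T ∧
        (states n τ σ T).card = τ * σ / d) :=
  ⟨fun _ _ hG hτ hσ hS _ _ hs => hs ▸ PeriodicTile.exists_dvd_gcd_card_states_mul_eq hG hτ hσ hS,
    fun _ hd hn => PeriodicTile.exists_tile_card_states_eq hd hn⟩

/-- An integer `s ≤ n` is the number of distinct states in a simple tile of a
periodic solution with minimal periods `τ` and `σ` if and only if `s = τσ/d` for
some divisor `d` of `gcd(τ,σ)`. -/
theorem simple_tile_state_counts (n τ σ : ℕ) [NeZero n] [NeZero τ] [NeZero σ] :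
    (∀ (f : ZMod n → ZMod n → ZMod n) (T : ZMod τ → ZMod σ → ZMod n),
      GenBy n τ σ f T → MinTemporal n τ σ T → MinSpatial n τ σ T → Simple n τ σ T →
      ∀ s : ℕ, s ≤ n → (states n τ σ T).card = s →
        ∃ d, d ∣ Nat.gcd τ σ ∧ s * d = τ * σ) ∧
    (∀ d : ℕ, d ∣ Nat.gcd τ σ → τ * σ / d ≤ n →
      ∃ (f : ZMod n → ZMod n → ZMod n) (T : ZMod τ → ZMod σ → ZMod n),
        GenBy n τ σ f T ∧ MinTemporal n τ σ T ∧ MinSpatial n τ σ T ∧ Simple n τ σ T ∧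
        (states n τ σ T).card = τ * σ / d) :=
  simple_tile_state_counts_general n τ σ
end

section
/- For positive integers τ, σ, n with n ≥ τσ, the number of simple tiles of periodic solutions with temporal period τ, spatial period σ, and exactly s = τσ/d distinct states (where d is a divisor of gcd(τ,σ)) equals φ(d) · C(n, s) · (s-1)!, where C(n,s) is the binomial coefficient and φ is the Euler totient. -/
theorem Nat.card_embedding {α β : Type*} [Finite α] [Finite β] :
    Nat.card (α ↪ β) = (Nat.card β).descFactorial (Nat.card α) := by
  have := Fintype.ofFinite α
  have := Fintype.ofFinite β
  rw [Nat.card_eq_fintype_card, Fintype.card_embedding_eq, Nat.card_eq_fintype_card,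
    Nat.card_eq_fintype_card]

theorem AddAction.card_orbitRel_quotient_mul {G X : Type*} [AddGroup G] [AddAction G X] [Finite X]
    {s : ℕ} (h : ∀ x : X, (stabilizer G x).index = s) :
    Nat.card (orbitRel.Quotient G X) * s = Nat.card X := by
  have := Fintype.ofFinite (orbitRel.Quotient G X)
  rw [Nat.card_congr (selfEquivSigmaOrbits G X), Nat.card_sigma]
  simp_rw [Nat.card_coe_set_eq, ← index_stabilizer, h, Finset.sum_const, Finset.card_univ,
    smul_eq_mul, Nat.card_eq_fintype_card]

theorem ZMod.prod_addSubmonoid_eq_top {a b : ℕ} [NeZero a] [NeZero b]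
    {S : AddSubmonoid (ZMod a × ZMod b)} (h₀₁ : (0, 1) ∈ S) (h₁₁ : (1, 1) ∈ S) : S = ⊤ := by
  refine eq_top_iff.2 fun v _ => ?_
  convert add_mem (nsmul_mem h₁₁ v.1.val) (nsmul_mem h₀₁ (v.2 - v.1.val).val) using 1
  ext <;> simp

open AddSubgroup

section Axes
variable {A B : Type*} [AddCommGroup A] [AddCommGroup B]

def MeetsAxesTrivially (H : AddSubgroup (A × B)) : Prop :=
  (∀ a, (a, (0 : B)) ∈ H → a = 0) ∧ ∀ b, ((0 : A), b) ∈ H → b = 0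

theorem meetsAxesTrivially_zmultiples {x : A} {y : B} (h : addOrderOf x = addOrderOf y) :
    MeetsAxesTrivially (zmultiples (x, y)) := by
  have key (k : ℤ) : k • x = 0 ↔ k • y = 0 := by
    rw [← addOrderOf_dvd_iff_zsmul_eq_zero, ← addOrderOf_dvd_iff_zsmul_eq_zero, h]
  constructor
  · intro a ha
    obtain ⟨k, hk⟩ := mem_zmultiples_iff.1 ha
    simp only [Prod.smul_mk, Prod.mk.injEq] at hk
    rw [← hk.1, key, hk.2]
  · intro b hb
    obtain ⟨k, hk⟩ := mem_zmultiples_iff.1 hb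
    simp only [Prod.smul_mk, Prod.mk.injEq] at hk
    rw [← hk.2, ← key, hk.1]

theorem addOrderOf_prod_of_eq {x : A} {y : B} (h : addOrderOf x = addOrderOf y) :
    addOrderOf (x, y) = addOrderOf x := by
  rw [Prod.addOrderOf, ← h, Nat.lcm_self]

theorem snd_eq_of_mem_zmultiples {x : A} {y y' : B} (h : addOrderOf x = addOrderOf y)
    (hmem : (x, y') ∈ zmultiples (x, y)) : y' = y := by
  obtain ⟨k, hk⟩ := mem_zmultiples_iff.1 hmem
  simp only [Prod.smul_mk, Prod.mk.injEq] at hk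
  have hky : (k - 1) • y = 0 := by
    rw [← addOrderOf_dvd_iff_zsmul_eq_zero, ← h, addOrderOf_dvd_iff_zsmul_eq_zero]
    simp [sub_zsmul, hk.1]
  rw [← hk.2]
  exact add_neg_eq_zero.1 (by simpa [sub_zsmul] using hky)

theorem MeetsAxesTrivially.injective_fst {H : AddSubgroup (A × B)} (hH : MeetsAxesTrivially H) :
    Function.Injective ((AddMonoidHom.fst A B).comp H.subtype) := by
  refine (injective_iff_map_eq_zero _).2 fun h h0 => ?_
  have : (h : A × B) = ((0 : A), (h : A × B).2) := Prod.ext h0 rfl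
  exact Subtype.ext (Prod.ext h0 (hH.2 _ (this ▸ h.2)))

theorem MeetsAxesTrivially.injective_snd {H : AddSubgroup (A × B)} (hH : MeetsAxesTrivially H) :
    Function.Injective ((AddMonoidHom.snd A B).comp H.subtype) := by
  refine (injective_iff_map_eq_zero _).2 fun h h0 => ?_
  have : (h : A × B) = ((h : A × B).1, (0 : B)) := Prod.ext rfl h0
  exact Subtype.ext (Prod.ext (hH.1 _ (this ▸ h.2)) h0)

theorem MeetsAxesTrivially.exists_mk_mem [IsAddCyclic A] [Finite A]
    {H : AddSubgroup (A × B)} (hH : MeetsAxesTrivially H) {x : A}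
    (hx : addOrderOf x = Nat.card H) : ∃ y, (x, y) ∈ H := by
  set f := (AddMonoidHom.fst A B).comp H.subtype
  have hcard : Nat.card f.range = Nat.card H := by
    rw [AddMonoidHom.range_eq_map, card_map_of_injective hH.injective_fst, card_top]
  have hle : f.range ≤ (nsmulAddMonoidHom (Nat.card H) : A →+ A).ker := by
    rintro _ ⟨h, rfl⟩
    rw [AddMonoidHom.mem_ker, nsmulAddMonoidHom_apply, ← map_nsmul, card_nsmul_eq_zero', map_zero]
  have hker : Nat.card (nsmulAddMonoidHom (Nat.card H) : A →+ A).ker = Nat.card H := by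
    rw [IsAddCyclic.card_nsmulAddMonoidHom_ker, Nat.gcd_eq_right]
    exact hcard ▸ card_addSubgroup_dvd_card f.range
  have heq := eq_of_le_of_card_ge hle (hker.trans hcard.symm).le
  have hxmem : x ∈ f.range := by
    rw [heq, AddMonoidHom.mem_ker, nsmulAddMonoidHom_apply, ← hx, addOrderOf_nsmul_eq_zero]
  obtain ⟨h, rfl⟩ := hxmem
  exact ⟨(h : A × B).2, h.2⟩

theorem card_addSubgroups_meetsAxesTrivially [IsAddCyclic A] [IsAddCyclic B] [Finite A]
    [Finite B] {d : ℕ} (hdA : d ∣ Nat.card A) (hdB : d ∣ Nat.card B) :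
    Nat.card {H : AddSubgroup (A × B) // MeetsAxesTrivially H ∧ Nat.card H = d} = d.totient := by
  have := Fintype.ofFinite A
  have := Fintype.ofFinite B
  have hd : 0 < d := Nat.pos_of_dvd_of_pos hdA Nat.card_pos
  obtain ⟨x, hx⟩ : ∃ x : A, addOrderOf x = d := by
    have h := IsAddCyclic.card_addOrderOf_eq_totient (α := A) (d := d)
      (Nat.card_eq_fintype_card (α := A) ▸ hdA)
    obtain ⟨x, hx⟩ := Finset.card_pos.1 (h ▸ Nat.totient_pos.2 hd)
    exact ⟨x, (Finset.mem_filter.1 hx).2⟩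
  let Ψ : {y : B // addOrderOf y = d} →
      {H : AddSubgroup (A × B) // MeetsAxesTrivially H ∧ Nat.card H = d} := fun y =>
    ⟨zmultiples (x, y), meetsAxesTrivially_zmultiples (hx.trans y.2.symm), by
      rw [Nat.card_zmultiples, addOrderOf_prod_of_eq (hx.trans y.2.symm), hx]⟩
  have hΨ : Function.Bijective Ψ := by
    constructor
    · intro y y' h
      have hmem : (x, (y' : B)) ∈ zmultiples (x, (y : B)) := by
        rw [show zmultiples (x, (y : B)) = zmultiples (x, (y' : B)) from congrArg Subtype.val h]
        exact mem_zmultiples _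
      exact Subtype.ext (snd_eq_of_mem_zmultiples (hx.trans y.2.symm) hmem).symm
    · rintro ⟨H, hH, hcard⟩
      obtain ⟨y, hy⟩ := hH.exists_mk_mem (hx.trans hcard.symm)
      have hxy : addOrderOf x = addOrderOf y :=
        (addOrderOf_injective _ hH.injective_fst ⟨_, hy⟩).trans
          (addOrderOf_injective _ hH.injective_snd ⟨_, hy⟩).symm
      refine ⟨⟨y, hxy ▸ hx⟩, Subtype.ext ?_⟩
      refine eq_of_le_of_card_ge (zmultiples_le_of_mem hy) ?_
      rw [hcard, Nat.card_zmultiples, addOrderOf_prod_of_eq hxy, hx]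
  rw [← Nat.card_eq_of_bijective Ψ hΨ, Nat.card_eq_fintype_card, Fintype.card_subtype,
    ← IsAddCyclic.card_addOrderOf_eq_totient (Nat.card_eq_fintype_card (α := B) ▸ hdB)]

end Axes

section Fibers
variable {G β : Type*} [AddCommGroup G]

def HasTranslationInvariantFibers (F : G → β) : Prop :=
  ∀ v p q, F p = F q → F (p + v) = F (q + v)

def periods (F : G → β) : AddSubgroup G where
  carrier := {v | ∀ p, F (p + v) = F p}
  zero_mem' p := by rw [add_zero]
  add_mem' {v w} hv hw p := by rw [← add_assoc, hw, hv]
  neg_mem' {v} hv p := by rw [← hv (p + -v), neg_add_cancel_right]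

def fiberShifts (F : G → β) : AddSubmonoid G where
  carrier := {v | ∀ p q, F p = F q → F (p + v) = F (q + v)}
  zero_mem' p q h := by simpa using h
  add_mem' hv hw p q h := by simpa only [add_assoc] using hw _ _ (hv p q h)

theorem mem_periods {F : G → β} {v : G} : v ∈ periods F ↔ ∀ p, F (p + v) = F p := Iff.rfl

theorem HasTranslationInvariantFibers.eq_iff {F : G → β} (hF : HasTranslationInvariantFibers F)
    {p q : G} : F p = F q ↔ p - q ∈ periods F := by
  refine ⟨fun h r => ?_, fun h => ?_⟩
  · simpa only [add_sub_cancel, add_sub_left_comm] using hF (r - q) p q h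
  · simpa using h q

theorem HasTranslationInvariantFibers.comp_add_right {F : G → β}
    (hF : HasTranslationInvariantFibers F) (v : G) :
    HasTranslationInvariantFibers fun p => F (p + v) := fun w p q h => by
  simpa only [add_right_comm _ v w] using hF w _ _ h

theorem periods_comp_add_right (F : G → β) (v : G) :
    periods (fun p => F (p + v)) = periods F := by
  ext w
  refine ⟨fun h p => ?_, fun h p => ?_⟩
  · simpa [sub_add_eq_add_sub] using h (p - v)
  · simpa only [add_right_comm _ v w] using h (p + v)

variable {H : AddSubgroup G}

def embeddingOfFibers {F : G → β} (hF : ∀ p q, F p = F q ↔ p - q ∈ H) : G ⧸ H ↪ β where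
  toFun := Quotient.lift F fun p q hpq =>
    ((hF q p).2 (by rw [← neg_add_eq_sub]; exact QuotientAddGroup.leftRel_apply.1 hpq)).symm
  inj' x y hxy := by
    obtain ⟨p, rfl⟩ := QuotientAddGroup.mk_surjective x
    obtain ⟨q, rfl⟩ := QuotientAddGroup.mk_surjective y
    exact QuotientAddGroup.eq.2 (by rw [neg_add_eq_sub]; exact (hF q p).1 hxy.symm)

theorem embedding_mk_eq_iff (b : G ⧸ H ↪ β) (p q : G) :
    b p = b q ↔ p - q ∈ H := by
  rw [b.injective.eq_iff, QuotientAddGroup.eq, ← sub_mem_comm_iff, neg_add_eq_sub]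

theorem hasTranslationInvariantFibers_embedding_mk (b : G ⧸ H ↪ β) :
    HasTranslationInvariantFibers fun p : G => b p := fun v p q h => by
  rw [embedding_mk_eq_iff] at h ⊢
  rwa [add_sub_add_right_eq_sub]

theorem periods_embedding_mk (b : G ⧸ H ↪ β) : periods (fun p : G => b p) = H := by
  ext v
  simp only [mem_periods, embedding_mk_eq_iff, add_sub_cancel_left]
  exact ⟨fun h => h 0, fun h _ => h⟩

theorem HasTranslationInvariantFibers.card_range {F : G → β}
    (hF : HasTranslationInvariantFibers F) : Nat.card (Set.range F) = (periods F).index := by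
  let b := embeddingOfFibers fun _ _ => hF.eq_iff
  change Nat.card (Set.range (b ∘ QuotientAddGroup.mk)) = _
  rw [QuotientAddGroup.mk_surjective.range_comp, Nat.card_range_of_injective b.injective]
  rfl

noncomputable def invariantFibersEquivSigma (P : AddSubgroup G → Prop) :
    {F : G → β // HasTranslationInvariantFibers F ∧ P (periods F)} ≃
      Σ H : {H : AddSubgroup G // P H}, (G ⧸ H.1 ↪ β) :=
  (Equiv.sigmaSubtypeFiberEquiv (fun F => periods F.1) P fun F => F.2.2).symm.trans <|
    Equiv.sigmaCongrRight fun H =>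
      { toFun := fun F => embeddingOfFibers fun _ _ => F.2 ▸ F.1.2.1.eq_iff
        invFun := fun b => ⟨⟨fun p => b p, hasTranslationInvariantFibers_embedding_mk b,
          (periods_embedding_mk b).symm ▸ H.2⟩, periods_embedding_mk b⟩
        left_inv := fun F => rfl
        right_inv := fun b => by
          ext x
          obtain ⟨p, rfl⟩ := QuotientAddGroup.mk_surjective x
          rfl }

end Fibers

section Tiles
variable {n τ σ s : ℕ} {T : ZMod τ → ZMod σ → ZMod n}

theorem minTemporal_and_minSpatial_iff :
    MinTemporal n τ σ T ∧ MinSpatial n τ σ T ↔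
      MeetsAxesTrivially (periods (Function.uncurry T)) := by
  simp only [MinTemporal, MinSpatial, MeetsAxesTrivially, mem_periods, Prod.forall,
    Prod.mk_add_mk, Function.uncurry_apply_pair, add_zero]
  refine and_congr (forall_congr' fun t => ?_) (forall_congr' fun c => ?_) <;>
  · rw [← not_imp_comm]
    push Not
    rfl

variable [NeZero τ] [NeZero σ]

theorem simple_iff :
    Simple n τ σ T ↔ ∀ i j i' j', T i j = T i' j' → T i (j + 1) = T i' (j' + 1) := by
  have hstates : states n τ σ T = (pairs n τ σ T).image Prod.fst := by
    simp only [states, pairs, Finset.image_image]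
    rfl
  rw [Simple, hstates, eq_comm, Finset.card_image_iff]
  constructor
  · intro hinj i j i' j' h
    exact congrArg Prod.snd (hinj (Finset.mem_image_of_mem _ (Finset.mem_univ (i, j)))
      (Finset.mem_image_of_mem _ (Finset.mem_univ (i', j'))) h)
  · rintro hstep _ hx _ hy hxy
    obtain ⟨⟨i, j⟩, -, rfl⟩ := Finset.mem_image.1 hx
    obtain ⟨⟨i', j'⟩, -, rfl⟩ := Finset.mem_image.1 hy
    exact Prod.ext hxy (hstep i j i' j' hxy)

theorem genBy_and_simple_iff :
    (∃ f, GenBy n τ σ f T) ∧ Simple n τ σ T ↔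
      HasTranslationInvariantFibers (Function.uncurry T) := by
  rw [simple_iff]
  constructor
  · rintro ⟨⟨f, hf⟩, hstep⟩
    have h₀₁ : ((0 : ZMod τ), (1 : ZMod σ)) ∈ fiberShifts (Function.uncurry T) := by
      rintro ⟨i, j⟩ ⟨i', j'⟩ h
      simpa using hstep i j i' j' h
    have h₁₁ : ((1 : ZMod τ), (1 : ZMod σ)) ∈ fiberShifts (Function.uncurry T) := by
      rintro ⟨i, j⟩ ⟨i', j'⟩ h
      simp only [Prod.mk_add_mk, Function.uncurry_apply_pair] at h ⊢
      rw [hf, hf, h, hstep i j i' j' h]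
    exact (AddSubmonoid.eq_top_iff' _).1 (ZMod.prod_addSubmonoid_eq_top h₀₁ h₁₁)
  · intro hF
    refine ⟨⟨fun x _ => Function.uncurry T (Function.invFun (Function.uncurry T) x + (1, 1)),
      fun i j => hF (1, 1) (i, j) _ (Function.invFun_eq ⟨(i, j), rfl⟩).symm⟩,
      fun i j i' j' h => by simpa using hF (0, 1) (i, j) (i', j') h⟩

theorem card_states (hT : HasTranslationInvariantFibers (Function.uncurry T)) :
    (states n τ σ T).card = (periods (Function.uncurry T)).index := by
  rw [← hT.card_range, Nat.card_eq_card_toFinset, Set.toFinset_range]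
  rfl

def IsSimpleTile (n τ σ : ℕ) [NeZero τ] [NeZero σ] (s : ℕ) (T : ZMod τ → ZMod σ → ZMod n) :
    Prop :=
  (∃ f, GenBy n τ σ f T) ∧ MinTemporal n τ σ T ∧ MinSpatial n τ σ T ∧ Simple n τ σ T ∧
    (states n τ σ T).card = s

theorem isSimpleTile_iff :
    IsSimpleTile n τ σ s T ↔ HasTranslationInvariantFibers (Function.uncurry T) ∧
      MeetsAxesTrivially (periods (Function.uncurry T)) ∧
        (periods (Function.uncurry T)).index = s := by
  constructor
  · rintro ⟨hf, hτ, hσ, hS, hs⟩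
    have hF := genBy_and_simple_iff.1 ⟨hf, hS⟩
    exact ⟨hF, minTemporal_and_minSpatial_iff.1 ⟨hτ, hσ⟩, (card_states hF).symm.trans hs⟩
  · rintro ⟨hF, hax, hs⟩
    obtain ⟨hf, hS⟩ := genBy_and_simple_iff.2 hF
    obtain ⟨hτ, hσ⟩ := minTemporal_and_minSpatial_iff.2 hax
    exact ⟨hf, hτ, hσ, hS, (card_states hF).trans hs⟩

theorem IsSimpleTile.rotate (hT : IsSimpleTile n τ σ s T) (v : ZMod τ × ZMod σ) :
    IsSimpleTile n τ σ s fun i j => T (i + v.1) (j + v.2) := by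
  obtain ⟨hF, hax, hs⟩ := isSimpleTile_iff.1 hT
  refine isSimpleTile_iff.2 ?_
  change HasTranslationInvariantFibers (fun p => Function.uncurry T (p + v)) ∧
    MeetsAxesTrivially (periods fun p => Function.uncurry T (p + v)) ∧
      (periods fun p => Function.uncurry T (p + v)).index = s
  rw [periods_comp_add_right]
  exact ⟨hF.comp_add_right v, hax, hs⟩

instance :
    AddAction (ZMod τ × ZMod σ) {T : ZMod τ → ZMod σ → ZMod n // IsSimpleTile n τ σ s T} where
  vadd v T := ⟨fun i j => T.1 (i + v.1) (j + v.2), T.2.rotate v⟩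
  zero_vadd T := Subtype.ext <| funext₂ fun i j => congrArg₂ T.1 (add_zero i) (add_zero j)
  add_vadd v w T := Subtype.ext <| funext₂ fun i j =>
    congrArg₂ T.1 (add_assoc i v.1 w.1).symm (add_assoc j v.2 w.2).symm

theorem stabilizer_eq_periods (T : {T : ZMod τ → ZMod σ → ZMod n // IsSimpleTile n τ σ s T}) :
    AddAction.stabilizer (ZMod τ × ZMod σ) T = periods (Function.uncurry T.1) := by
  ext v
  rw [AddAction.mem_stabilizer_iff, mem_periods, Subtype.ext_iff, Prod.forall]
  exact ⟨fun h i j => congrFun (congrFun h i) j, fun h => funext₂ h⟩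

end Tiles

section Counting
variable {n τ σ s : ℕ} [NeZero n] [NeZero τ] [NeZero σ]

theorem card_quot_rotation_mul :
    Nat.card (Quot fun T₁ T₂ : {T : ZMod τ → ZMod σ → ZMod n // IsSimpleTile n τ σ s T} =>
      ∃ (t : ZMod τ) (c : ZMod σ), ∀ i j, T₂.1 i j = T₁.1 (i + t) (j + c)) * s =
      Nat.card {T : ZMod τ → ZMod σ → ZMod n // IsSimpleTile n τ σ s T} := by
  rw [← AddAction.card_orbitRel_quotient_mul (G := ZMod τ × ZMod σ)
    (X := {T : ZMod τ → ZMod σ → ZMod n // IsSimpleTile n τ σ s T}) fun T =>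
      (stabilizer_eq_periods T).symm ▸ (isSimpleTile_iff.1 T.2).2.2]
  refine congrArg (· * s) (Nat.card_congr (Quot.congrRight fun T₁ T₂ => ?_))
  rw [Setoid.comm', AddAction.orbitRel_apply, AddAction.mem_orbit_iff]
  refine ⟨fun ⟨t, c, h⟩ => ⟨(t, c), Subtype.ext (funext₂ fun i j => (h i j).symm)⟩,
    fun ⟨v, hv⟩ => ⟨v.1, v.2, fun i j => by rw [← hv]; rfl⟩⟩

theorem card_addSubgroups_meetsAxesTrivially_index_eq {d : ℕ} (hd : d ∣ Nat.gcd τ σ)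
    (hs : s * d = τ * σ) :
    Nat.card {H : AddSubgroup (ZMod τ × ZMod σ) // MeetsAxesTrivially H ∧ H.index = s} =
      d.totient := by
  have hτσ : Nat.card (ZMod τ × ZMod σ) = s * d := by
    rw [Nat.card_prod, Nat.card_zmod, Nat.card_zmod, hs]
  have hs0 : s ≠ 0 := left_ne_zero_of_mul (hτσ ▸ Nat.card_pos.ne')
  have hd0 : d ≠ 0 := right_ne_zero_of_mul (hτσ ▸ Nat.card_pos.ne')
  have hindex (H : AddSubgroup (ZMod τ × ZMod σ)) : H.index = s ↔ Nat.card H = d := by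
    have := H.card_mul_index
    rw [hτσ] at this
    constructor <;> rintro rfl
    · exact Nat.eq_of_mul_eq_mul_right (Nat.pos_of_ne_zero hs0) (this.trans (mul_comm _ _))
    · exact Nat.eq_of_mul_eq_mul_left (Nat.pos_of_ne_zero hd0) (this.trans (mul_comm _ _))
  rw [← card_addSubgroups_meetsAxesTrivially (A := ZMod τ) (B := ZMod σ)
    (by rw [Nat.card_zmod]; exact hd.trans (Nat.gcd_dvd_left τ σ))
    (by rw [Nat.card_zmod]; exact hd.trans (Nat.gcd_dvd_right τ σ))]
  exact Nat.card_congr (Equiv.subtypeEquivRight fun H => and_congr_right' (hindex H))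

theorem card_isSimpleTile {d : ℕ} (hd : d ∣ Nat.gcd τ σ) (hs : s * d = τ * σ) :
    Nat.card {T : ZMod τ → ZMod σ → ZMod n // IsSimpleTile n τ σ s T} =
      d.totient * n.descFactorial s := by
  have := Fintype.ofFinite {H : AddSubgroup (ZMod τ × ZMod σ) // MeetsAxesTrivially H ∧ H.index = s}
  rw [Nat.card_congr (Equiv.subtypeEquiv (q := fun F => HasTranslationInvariantFibers F ∧
      MeetsAxesTrivially (periods F) ∧ (periods F).index = s) (Equiv.curry _ _ _).symm
      fun T => isSimpleTile_iff),
    Nat.card_congr (invariantFibersEquivSigma (β := ZMod n) fun H : AddSubgroup (ZMod τ × ZMod σ) =>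
      MeetsAxesTrivially H ∧ H.index = s), Nat.card_sigma]
  simp_rw [Nat.card_embedding, Nat.card_zmod]
  rw [Finset.sum_congr rfl fun H _ => congrArg n.descFactorial H.2.2, Finset.sum_const,
    Finset.card_univ, ← Nat.card_eq_fintype_card,
    card_addSubgroups_meetsAxesTrivially_index_eq hd hs, smul_eq_mul]

end Counting

theorem count_simple_tiles_general (n τ σ : ℕ) [NeZero n] [NeZero τ] [NeZero σ]
    (d : ℕ) (hd : d ∣ Nat.gcd τ σ) (s : ℕ) (hs : s * d = τ * σ) :
    Nat.card (Quot (fun (T₁ T₂ : {T : ZMod τ → ZMod σ → ZMod n //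
        (∃ f, GenBy n τ σ f T) ∧ MinTemporal n τ σ T ∧ MinSpatial n τ σ T ∧
          Simple n τ σ T ∧ (states n τ σ T).card = s}) =>
      ∃ (t : ZMod τ) (c : ZMod σ), ∀ i j, T₂.1 i j = T₁.1 (i + t) (j + c))) =
    Nat.totient d * Nat.choose n s * Nat.factorial (s - 1) := by
  have hs0 : s ≠ 0 := by
    rintro rfl
    exact mul_ne_zero (NeZero.ne τ) (NeZero.ne σ) (by rw [← hs, zero_mul])
  apply Nat.eq_of_mul_eq_mul_right (Nat.pos_of_ne_zero hs0)
  refine (card_quot_rotation_mul.trans (card_isSimpleTile hd hs)).trans ?_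
  rw [Nat.descFactorial_eq_factorial_mul_choose, ← Nat.mul_factorial_pred hs0]
  ring

/-- The number of simple tiles of periodic solutions with temporal period `τ`,
spatial period `σ`, and exactly `s = τσ/d` distinct states (counted up to
space-time rotation) equals `φ(d) · C(n,s) · (s-1)!`. -/
theorem count_simple_tiles (n τ σ : ℕ) [NeZero n] [NeZero τ] [NeZero σ]
    (hn : τ * σ ≤ n) (d : ℕ) (hd : d ∣ Nat.gcd τ σ) (s : ℕ) (hs : s * d = τ * σ) :
    Nat.card (Quot (fun (T₁ T₂ : {T : ZMod τ → ZMod σ → ZMod n //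
        (∃ f, GenBy n τ σ f T) ∧ MinTemporal n τ σ T ∧ MinSpatial n τ σ T ∧
          Simple n τ σ T ∧ (states n τ σ T).card = s}) =>
      ∃ (t : ZMod τ) (c : ZMod σ), ∀ i j, T₂.1 i j = T₁.1 (i + t) (j + c))) =
    Nat.totient d * Nat.choose n s * Nat.factorial (s - 1) :=
  count_simple_tiles_general n τ σ d hd s hs
end

section
/- Let T₁ and T₂ be two distinct simple tiles generated by the same rule f. If T₁ and T₂ share at least one common state, then there exist positions (i,j) in T₁ and (k,m) in T₂ with T₁(i,j) = T₂(k,m) but T₁(i,j+1) ≠ T₂(k,m+1). -/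
/-- The doubly periodic extension of a tile to all of `ℤ × ℤ`, used to compare
tiles of different shapes up to space-time rotation. -/
def ext (n τ σ : ℕ) (T : ZMod τ → ZMod σ → ZMod n) : ℤ → ℤ → ZMod n :=
  fun i j => T (i : ZMod τ) (j : ZMod σ)

lemma cast_emod_aux (d : ℕ) (M : ℤ) (hM : 0 < M) (h : (d:ℤ) ∣ M) (a : ℤ) :
    (((a % M).toNat : ℕ) : ZMod d) = (a : ZMod d) := by
  have h1 : ((a % M).toNat : ℤ) = a % M := Int.toNat_of_nonneg (Int.emod_nonneg a hM.ne')
  have h2 : (((a % M).toNat : ℤ) : ZMod d) = ((a % M : ℤ) : ZMod d) := by rw [h1]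
  rw [Int.cast_natCast] at h2
  rw [h2, ZMod.intCast_eq_intCast_iff]
  show (a % M) % (d:ℤ) = a % (d:ℤ)
  exact Int.emod_emod_of_dvd a h

/-- If two distinct (not equal up to space-time rotation) simple tiles generated by
the same rule `f` share at least one common state, then there exist positions with
equal states whose right neighbors differ. -/
theorem distinct_simple_tiles_extra_assignment
    (n τ₁ σ₁ τ₂ σ₂ : ℕ) [NeZero τ₁] [NeZero σ₁] [NeZero τ₂] [NeZero σ₂]
    (f : ZMod n → ZMod n → ZMod n)
    (T₁ : ZMod τ₁ → ZMod σ₁ → ZMod n) (T₂ : ZMod τ₂ → ZMod σ₂ → ZMod n)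
    (hT₁ : GenBy n τ₁ σ₁ f T₁) (hT₂ : GenBy n τ₂ σ₂ f T₂)
    (hS₁ : Simple n τ₁ σ₁ T₁) (hS₂ : Simple n τ₂ σ₂ T₂)
    (hmt₁ : MinTemporal n τ₁ σ₁ T₁) (hms₁ : MinSpatial n τ₁ σ₁ T₁)
    (hmt₂ : MinTemporal n τ₂ σ₂ T₂) (hms₂ : MinSpatial n τ₂ σ₂ T₂)
    (hdistinct : ¬ ∃ (t c : ℤ), ∀ i j : ℤ, ext n τ₂ σ₂ T₂ i j = ext n τ₁ σ₁ T₁ (i + t) (j + c))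
    (hshare : ∃ (i : ZMod τ₁) (j : ZMod σ₁) (k : ZMod τ₂) (m : ZMod σ₂), T₁ i j = T₂ k m) :
    ∃ (i : ZMod τ₁) (j : ZMod σ₁) (k : ZMod τ₂) (m : ZMod σ₂),
      T₁ i j = T₂ k m ∧ T₁ i (j + 1) ≠ T₂ k (m + 1) := by
  by_contra hcon
  push_neg at hcon
  obtain ⟨i₀, j₀, k₀, m₀, heq⟩ := hshare
  have row : ∀ (i : ZMod τ₁) (j : ZMod σ₁) (k : ZMod τ₂) (m : ZMod σ₂),
      T₁ i j = T₂ k m → ∀ b : ℕ, T₁ i (j + b) = T₂ k (m + b) := by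
    intro i j k m h b
    induction b with
    | zero => simpa using h
    | succ b ih =>
      have h1 := hcon i (j + b) k (m + b) ih
      push_cast
      calc T₁ i (j + (b + 1)) = T₁ i ((j + b) + 1) := by ring_nf
        _ = T₂ k ((m + b) + 1) := h1
        _ = T₂ k (m + (b + 1)) := by ring_nf
  have diag : ∀ a : ℕ, T₁ (i₀ + a) (j₀ + a) = T₂ (k₀ + a) (m₀ + a) := by
    intro a
    induction a with
    | zero => simpa using heq
    | succ a ih =>
      have h1 := hcon (i₀ + a) (j₀ + a) (k₀ + a) (m₀ + a) ih
      have e1 := hT₁ (i₀ + a) (j₀ + a)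
      have e2 := hT₂ (k₀ + a) (m₀ + a)
      push_cast
      calc T₁ (i₀ + (a + 1)) (j₀ + (a + 1))
          = T₁ ((i₀ + a) + 1) ((j₀ + a) + 1) := by ring_nf
        _ = f (T₁ (i₀ + a) (j₀ + a)) (T₁ (i₀ + a) ((j₀ + a) + 1)) := e1
        _ = f (T₂ (k₀ + a) (m₀ + a)) (T₂ (k₀ + a) ((m₀ + a) + 1)) := by rw [ih, h1]
        _ = T₂ ((k₀ + a) + 1) ((m₀ + a) + 1) := e2.symm
        _ = T₂ (k₀ + (a + 1)) (m₀ + (a + 1)) := by ring_nf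
  have full : ∀ a b : ℕ, T₁ (i₀ + a) (j₀ + a + b) = T₂ (k₀ + a) (m₀ + a + b) :=
    fun a b => row _ _ _ _ (diag a) b
  have hτ : (0:ℤ) < (τ₁ * τ₂ : ℕ) := by
    have := Nat.pos_of_ne_zero (NeZero.ne τ₁)
    have := Nat.pos_of_ne_zero (NeZero.ne τ₂)
    positivity
  have hσ : (0:ℤ) < (σ₁ * σ₂ : ℕ) := by
    have := Nat.pos_of_ne_zero (NeZero.ne σ₁)
    have := Nat.pos_of_ne_zero (NeZero.ne σ₂)
    positivity
  have intFull : ∀ a b : ℤ,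
      T₁ (i₀ + (a : ZMod τ₁)) (j₀ + (b : ZMod σ₁)) = T₂ (k₀ + (a : ZMod τ₂)) (m₀ + (b : ZMod σ₂)) := by
    intro a b
    set A : ℕ := (a % ((τ₁ * τ₂ : ℕ) : ℤ)).toNat with hAdef
    set B : ℕ := ((b - A) % ((σ₁ * σ₂ : ℕ) : ℤ)).toNat with hBdef
    have hA1 : ((A : ℕ) : ZMod τ₁) = (a : ZMod τ₁) := by
      apply cast_emod_aux _ _ hτ; exact_mod_cast Dvd.intro τ₂ rfl
    have hA2 : ((A : ℕ) : ZMod τ₂) = (a : ZMod τ₂) := by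
      apply cast_emod_aux _ _ hτ; exact_mod_cast Dvd.intro_left τ₁ rfl
    have hB1 : ((B : ℕ) : ZMod σ₁) = ((b - A : ℤ) : ZMod σ₁) := by
      apply cast_emod_aux _ _ hσ; exact_mod_cast Dvd.intro σ₂ rfl
    have hB2 : ((B : ℕ) : ZMod σ₂) = ((b - A : ℤ) : ZMod σ₂) := by
      apply cast_emod_aux _ _ hσ; exact_mod_cast Dvd.intro_left σ₁ rfl
    have key := full A B
    rw [hA1, hA2] at key
    have e1 : ((A : ZMod σ₁) + (B : ZMod σ₁) : ZMod σ₁) = (b : ZMod σ₁) := by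
      rw [hB1]; push_cast; ring
    have e2 : ((A : ZMod σ₂) + (B : ZMod σ₂) : ZMod σ₂) = (b : ZMod σ₂) := by
      rw [hB2]; push_cast; ring
    calc T₁ (i₀ + (a : ZMod τ₁)) (j₀ + (b : ZMod σ₁))
        = T₁ (i₀ + (a : ZMod τ₁)) (j₀ + (A : ZMod σ₁) + (B : ZMod σ₁)) := by
          rw [add_assoc, e1]
      _ = T₂ (k₀ + (a : ZMod τ₂)) (m₀ + (A : ZMod σ₂) + (B : ZMod σ₂)) := key
      _ = T₂ (k₀ + (a : ZMod τ₂)) (m₀ + (b : ZMod σ₂)) := by rw [add_assoc, e2]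
  apply hdistinct
  refine ⟨(i₀.val : ℤ) - (k₀.val : ℤ), (j₀.val : ℤ) - (m₀.val : ℤ), ?_⟩
  intro i j
  have key := intFull (i - (k₀.val : ℤ)) (j - (m₀.val : ℤ))
  show T₂ (i : ZMod τ₂) (j : ZMod σ₂) = T₁ _ _
  have a1 : k₀ + ((i - (k₀.val : ℤ) : ℤ) : ZMod τ₂) = ((i : ℤ) : ZMod τ₂) := by
    push_cast
    simp [ZMod.natCast_val, ZMod.cast_id]
  have a2 : m₀ + ((j - (m₀.val : ℤ) : ℤ) : ZMod σ₂) = ((j : ℤ) : ZMod σ₂) := by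
    push_cast
    simp [ZMod.natCast_val, ZMod.cast_id]
  have a3 : i₀ + ((i - (k₀.val : ℤ) : ℤ) : ZMod τ₁) = ((i + ((i₀.val : ℤ) - (k₀.val : ℤ)) : ℤ) : ZMod τ₁) := by
    push_cast
    simp [ZMod.natCast_val, ZMod.cast_id]
    ring
  have a4 : j₀ + ((j - (m₀.val : ℤ) : ℤ) : ZMod σ₁) = ((j + ((j₀.val : ℤ) - (m₀.val : ℤ)) : ℤ) : ZMod σ₁) := by
    push_cast
    simp [ZMod.natCast_val, ZMod.cast_id]
    ring
  rw [a1, a2, a3, a4] at key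
  exact key.symm
end
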